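/- Let Γ̂ : ℝ^p → ℝ be a convex differentiable function, let θ̃ ∈ ℝ^p with support S̃ of cardinality s̃, and let λ > 0 satisfy 2‖∇Γ̂(θ̃)‖_∞ ≤ λ. Suppose θ̂ minimizes θ ↦ Γ̂(θ) + λ‖θ‖₁. Then the error Δ = θ̂ − θ̃ lies in the cone C = {Δ : ‖Δ_{S̃ᶜ}‖₁ ≤ 3‖Δ_{S̃}‖₁}. -/

import Mathlib

open Finset InnerProductSpace

/-! A convex function lies above its tangent plane (check it on segments), so
`Γ θ̂ ≥ Γ θ̃ + ⟪∇Γ θ̃, Δ⟫ ≥ Γ θ̃ - (λ/2)‖Δ‖₁` by Hölder. Comparing with the optimality of `θ̂`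
against `θ̃` gives `2‖θ̂‖₁ ≤ 2‖θ̃‖₁ + ‖Δ‖₁`. Off `S̃` we have `|θ̂ k| = |Δ k|`, and on `S̃` the
triangle inequality gives `‖θ̃_{S̃}‖₁ ≤ ‖θ̂_{S̃}‖₁ + ‖Δ_{S̃}‖₁`; hence
`‖Δ_{S̃ᶜ}‖₁ ≤ 3‖Δ_{S̃}‖₁`. -/

theorem ConvexOn.add_inner_gradient_le {F : Type*} [NormedAddCommGroup F] [InnerProductSpace ℝ F]
    [CompleteSpace F] {f : F → ℝ} {G x : F} (hconv : ConvexOn ℝ Set.univ f)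
    (hgrad : HasGradientAt f G x) (y : F) :
    f x + ⟪G, y - x⟫_ℝ ≤ f y := by
  have hline : ConvexOn ℝ Set.univ (f ∘ AffineMap.lineMap (k := ℝ) x y) :=
    hconv.comp_affineMap (AffineMap.lineMap (k := ℝ) x y)
  have hderiv : HasDerivAt (f ∘ AffineMap.lineMap (k := ℝ) x y) ⟪G, y - x⟫_ℝ 0 := by
    have hf : HasFDerivAt f (toDual ℝ F G) (AffineMap.lineMap x y (0 : ℝ)) := by
      simpa using hgrad.hasFDerivAt
    simpa using hf.comp_hasDerivAt (0 : ℝ) AffineMap.hasDerivAt_lineMap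
  have hslope := hline.le_slope_of_hasDerivAt (Set.mem_univ _) (Set.mem_univ _) one_pos hderiv
  simp only [slope_def_field, Function.comp_apply, AffineMap.lineMap_apply_one,
    AffineMap.lineMap_apply_zero, sub_zero, div_one] at hslope
  linarith

theorem EuclideanSpace.abs_inner_le_mul_sum_abs {ι : Type*} [Fintype ι] {G : EuclideanSpace ℝ ι}
    {c : ℝ} (hG : ∀ k, |G k| ≤ c) (v : EuclideanSpace ℝ ι) :
    |⟪G, v⟫_ℝ| ≤ c * ∑ k, |v k| := by
  rw [PiLp.inner_apply, mul_sum]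
  refine (abs_sum_le_sum_abs _ _).trans (sum_le_sum fun k _ => ?_)
  rw [RCLike.inner_apply, conj_trivial, abs_mul, mul_comm]
  exact mul_le_mul_of_nonneg_right (hG k) (abs_nonneg _)

theorem sum_compl_abs_sub_le_three_mul {ι : Type*} [Fintype ι] [DecidableEq ι] (S : Finset ι)
    {x y : ι → ℝ} (hy : ∀ k, k ∉ S → y k = 0)
    (hbasic : 2 * ∑ k, |x k| ≤ 2 * ∑ k, |y k| + ∑ k, |x k - y k|) :
    ∑ k ∈ Sᶜ, |x k - y k| ≤ 3 * ∑ k ∈ S, |x k - y k| := by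
  have hy_compl : ∀ k ∈ Sᶜ, y k = 0 := fun k hk => hy k (mem_compl.mp hk)
  have hx : ∑ k, |x k| = ∑ k ∈ S, |x k| + ∑ k ∈ Sᶜ, |x k - y k| := by
    rw [← sum_add_sum_compl S fun k => |x k|]
    congr 1
    exact sum_congr rfl fun k hk => by rw [hy_compl k hk, sub_zero]
  have hy' : ∑ k, |y k| = ∑ k ∈ S, |y k| := by
    rw [← sum_add_sum_compl S fun k => |y k|,
      sum_eq_zero (s := Sᶜ) fun k hk => by rw [hy_compl k hk, abs_zero], add_zero]
  have hxy : ∑ k, |x k - y k| = ∑ k ∈ S, |x k - y k| + ∑ k ∈ Sᶜ, |x k - y k| :=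
    (sum_add_sum_compl S _).symm
  have htri : ∑ k ∈ S, |y k| ≤ ∑ k ∈ S, |x k| + ∑ k ∈ S, |x k - y k| := by
    rw [← sum_add_distrib]
    refine sum_le_sum fun k _ => ?_
    have := abs_sub_abs_le_abs_sub (y k) (x k)
    rw [abs_sub_comm] at this
    linarith
  linarith

theorem stmt_0_general {p : ℕ} (Γ : EuclideanSpace ℝ (Fin p) → ℝ)
    (G θt θh : EuclideanSpace ℝ (Fin p)) (S : Finset (Fin p)) (lam : ℝ)
    (hconv : ConvexOn ℝ Set.univ Γ)
    (hgrad : HasGradientAt Γ G θt)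
    (hsupp : ∀ k, k ∉ S → θt k = 0)
    (hlam : 0 < lam)
    (hpert : ∀ k, 2 * |G k| ≤ lam)
    (hmin : ∀ θ : EuclideanSpace ℝ (Fin p),
      Γ θh + lam * ∑ k, |θh k| ≤ Γ θ + lam * ∑ k, |θ k|) :
    ∑ k ∈ Sᶜ, |θh k - θt k| ≤ 3 * ∑ k ∈ S, |θh k - θt k| := by
  refine sum_compl_abs_sub_le_three_mul S (x := fun k => θh k) hsupp ?_
  have hfirst := hconv.add_inner_gradient_le hgrad θh
  have hinner := EuclideanSpace.abs_inner_le_mul_sum_abs (G := G) (c := lam / 2)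
    (fun k => by linarith [hpert k]) (θh - θt)
  simp only [PiLp.sub_apply] at hinner
  have hscaled : lam * (2 * ∑ k, |θh k|) ≤ lam * (2 * ∑ k, |θt k| + ∑ k, |θh k - θt k|) := by
    linarith [hmin θt, neg_abs_le ⟪G, θh - θt⟫_ℝ]
  exact le_of_mul_le_mul_left hscaled hlam

/-- the lasso error lies in the cone. -/
theorem stmt_0 {p : ℕ} (Γ : EuclideanSpace ℝ (Fin p) → ℝ)
    (G θt θh : EuclideanSpace ℝ (Fin p)) (S : Finset (Fin p)) (lam : ℝ)
    (hconv : ConvexOn ℝ Set.univ Γ) (hdiff : Differentiable ℝ Γ)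
    (hgrad : HasGradientAt Γ G θt)
    (hsupp : ∀ k, k ∉ S → θt k = 0)
    (hlam : 0 < lam)
    (hpert : ∀ k, 2 * |G k| ≤ lam)
    (hmin : ∀ θ : EuclideanSpace ℝ (Fin p),
      Γ θh + lam * ∑ k, |θh k| ≤ Γ θ + lam * ∑ k, |θ k|) :
    ∑ k ∈ Sᶜ, |θh k - θt k| ≤ 3 * ∑ k ∈ S, |θh k - θt k| :=
  stmt_0_general Γ G θt θh S lam hconv hgrad hsupp hlam hpert hmin
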